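/- arXiv:2511.23080 — 3 statements merged into one kernel-verified Lean document; each statement's English description precedes it below -/
import Mathlib

section
/- Let K be a field, l ≥ 2 an integer, and V = V_1 ⊕ ... ⊕ V_N a direct sum of finite-dimensional K-vector spaces, with projections pr_i : V → V_i. For alternating l-forms ω_i ∈ ⋀^l V_i*, the form ω = Σ_i pr_i*(ω_i) ∈ ⋀^l V* satisfies rk(ω) = Σ_i rk(ω_i). -/
/-! The contraction map of `ω = ∑ k, pr_k^* ω_k` factors as `v ↦ (v_k ⌟ ω_k)_k` followed by
`(η_k)_k ↦ ∑ k, pr_k^* η_k` on `(l - 1)`-forms. The image of the first map is the product of the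
images of the `v ↦ v ⌟ ω_k`, and the second map is injective once `l - 1 ≥ 1`, because evaluating
`∑ k, pr_k^* η_k` on vectors lying in the summand `V_k` recovers `η_k`. (For `l = 1` this fails:
`(l - 1)`-forms are scalars and the second map is summation.) -/

/-- The contraction map of an alternating `l`-form: `v ↦ v ⌟ ω`, as a function
from `l`-forms to linear maps into `(l-1)`-forms.  For `l = 0` it is zero. -/
noncomputable def contractMap {K V : Type*} [Field K] [AddCommGroup V] [Module K V] :
    {l : ℕ} → (V [⋀^Fin l]→ₗ[K] K) → (V →ₗ[K] (V [⋀^Fin (l - 1)]→ₗ[K] K))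
  | 0, _ => 0
  | (_ + 1), ω => AlternatingMap.curryLeft ω

/-- The rank of an alternating `l`-form `ω`: the rank of the linear map `v ↦ v ⌟ ω`. -/
noncomputable def formRank {K V : Type*} [Field K] [AddCommGroup V] [Module K V]
    {l : ℕ} (ω : V [⋀^Fin l]→ₗ[K] K) : ℕ :=
  Module.finrank K (LinearMap.range (contractMap ω))

namespace AlternatingMap

variable {R : Type*} [CommSemiring R] {ι κ : Type*} [Fintype κ] {M : Type*} [AddCommMonoid M]
  [Module R M] {Ms : κ → Type*}
  [∀ k, AddCommMonoid (Ms k)] [∀ k, Module R (Ms k)] {N : Type*} [AddCommMonoid N] [Module R N]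

instance : IsZeroApply (M [⋀^ι]→ₗ[R] N) (ι → M) N := ⟨zero_apply⟩

instance : IsAddApply (M [⋀^ι]→ₗ[R] N) (ι → M) N := ⟨add_apply⟩

def sumCompProj : (∀ k, Ms k [⋀^ι]→ₗ[R] N) →ₗ[R] ((∀ k, Ms k) [⋀^ι]→ₗ[R] N) where
  toFun η := ∑ k, (η k).compLinearMap (LinearMap.proj k)
  map_add' η η' := by
    ext v
    simp [sum_apply, Finset.sum_add_distrib]
  map_smul' c η := by
    ext v
    simp [sum_apply, Finset.smul_sum]

theorem sumCompProj_apply (η : ∀ k, Ms k [⋀^ι]→ₗ[R] N) (v : ι → ∀ k, Ms k) :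
    sumCompProj η v = ∑ k, η k (fun i => v i k) :=
  sum_apply _ _ _

theorem sumCompProj_apply_single [DecidableEq κ] [Nonempty ι] (η : ∀ k, Ms k [⋀^ι]→ₗ[R] N)
    (k : κ) (v : ι → Ms k) : sumCompProj η (fun i => Pi.single k (v i)) = η k v := by
  rw [sumCompProj_apply, Finset.sum_eq_single k]
  · simp
  · intro j _ hj
    simp only [Pi.single_eq_of_ne hj]
    exact (η j).map_zero
  · simp

theorem sumCompProj_injective [Nonempty ι] :
    Function.Injective (sumCompProj : (∀ k, Ms k [⋀^ι]→ₗ[R] N) → _) := by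
  classical
  intro η η' h
  funext k
  refine AlternatingMap.ext fun v => ?_
  rw [← sumCompProj_apply_single η, ← sumCompProj_apply_single η', h]

theorem curryLeft_sumCompProj {n : ℕ} (η : ∀ k, Ms k [⋀^Fin (n + 1)]→ₗ[R] N) :
    (sumCompProj η).curryLeft = sumCompProj ∘ₗ LinearMap.piMap fun k => (η k).curryLeft := by
  ext v : 1
  change curryLeftLinearMap (∑ k, (η k).compLinearMap (LinearMap.proj k)) v = _
  simp [sumCompProj, map_sum]

end AlternatingMap

theorem LinearMap.range_piMap {R ι : Type*} [Semiring R] {M N : ι → Type*}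
    [∀ i, AddCommMonoid (M i)] [∀ i, Module R (M i)] [∀ i, AddCommMonoid (N i)]
    [∀ i, Module R (N i)] (f : ∀ i, M i →ₗ[R] N i) :
    LinearMap.range (LinearMap.piMap f) = Submodule.pi Set.univ fun i => LinearMap.range (f i) :=
  SetLike.coe_injective <| by
    rw [LinearMap.coe_range, LinearMap.coe_piMap, Set.range_piMap]
    rfl

theorem Submodule.finrank_pi_univ {K ι : Type*} [DivisionRing K] [Fintype ι] {M : ι → Type*}
    [∀ i, AddCommGroup (M i)] [∀ i, Module K (M i)] (p : ∀ i, Submodule K (M i))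
    [∀ i, FiniteDimensional K (p i)] :
    Module.finrank K (Submodule.pi Set.univ p) = ∑ i, Module.finrank K (p i) := by
  let e : Submodule.pi Set.univ p ≃ₗ[K] ∀ i, p i :=
    { toFun x i := ⟨x.1 i, x.2 i trivial⟩
      invFun y := ⟨fun i => y i, fun i _ => (y i).2⟩
      map_add' _ _ := rfl
      map_smul' _ _ := rfl
      left_inv _ := rfl
      right_inv _ := rfl }
  rw [e.finrank_eq, Module.finrank_pi_fintype]

theorem LinearMap.finrank_range_comp_of_injective {R M N P : Type*} [Ring R] [AddCommGroup M]
    [Module R M] [AddCommGroup N] [Module R N] [AddCommGroup P] [Module R P]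
    {g : N →ₗ[R] P} (hg : Function.Injective g) (f : M →ₗ[R] N) :
    Module.finrank R (LinearMap.range (g ∘ₗ f)) = Module.finrank R (LinearMap.range f) := by
  rw [LinearMap.range_comp]
  exact (Submodule.equivMapOfInjective g hg _).finrank_eq.symm

theorem formRank_eq_finrank_range_curryLeft {K V : Type*} [Field K] [AddCommGroup V]
    [Module K V] {n : ℕ} (ω : V [⋀^Fin (n + 1)]→ₗ[K] K) :
    formRank ω = Module.finrank K (LinearMap.range ω.curryLeft) :=
  rfl

theorem formRank_sumCompProj {K κ : Type*} [Field K] [Fintype κ] {V : κ → Type*}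
    [∀ k, AddCommGroup (V k)] [∀ k, Module K (V k)] [∀ k, FiniteDimensional K (V k)] {n : ℕ}
    (ω : ∀ k, V k [⋀^Fin (n + 2)]→ₗ[K] K) :
    formRank (AlternatingMap.sumCompProj ω) = ∑ k, formRank (ω k) := by
  simp only [formRank_eq_finrank_range_curryLeft]
  rw [AlternatingMap.curryLeft_sumCompProj,
    LinearMap.finrank_range_comp_of_injective AlternatingMap.sumCompProj_injective,
    LinearMap.range_piMap, Submodule.finrank_pi_univ]

theorem stmt2 {K : Type*} [Field K] {N l : ℕ} (hl : 2 ≤ l)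
    (V : Fin N → Type*) [∀ i, AddCommGroup (V i)] [∀ i, Module K (V i)]
    [∀ i, FiniteDimensional K (V i)]
    (ω : ∀ i, (V i) [⋀^Fin l]→ₗ[K] K) :
    formRank (∑ i, (ω i).compLinearMap
        (LinearMap.proj i : ((j : Fin N) → V j) →ₗ[K] V i)) =
      ∑ i, formRank (ω i) := by
  obtain ⟨n, rfl⟩ := Nat.exists_eq_add_of_le' hl
  exact formRank_sumCompProj ω
end

section
/- Let K be a field, l ≥ 2 an integer, and V = V_1 ⊕ ... ⊕ V_N a direct sum of finite-dimensional K-vector spaces with projections pr_i : V → V_i, where each V_i has dimension l or l+1. Let ω_i ∈ ⋀^l V_i* be nonzero alternating l-forms. Then the tensor rank of ω = Σ_i pr_i*(ω_i) ∈ ⋀^l V* is exactly N. -/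
/-!
A nonzero `l`-form on a space of dimension `l` is a multiple of a determinant, hence decomposable.
On a space of dimension `l + 1` the contraction `v ↦ ι_v det` is injective between spaces of the
same dimension `l + 1`, so every `l`-form is some `ι_v det`; then `v` lies in its radical and the
form factors through an `l`-dimensional complement of the radical. Hence `trk ω ≤ N`.

Conversely, if `ω` is a sum of `r` decomposable forms, the common kernel of the `r l` linear forms
involved has codimension at most `r l` and lies in the radical of `ω`. As `l ≥ 2`, the radical of
`ω` lies in the product of the radicals of the `ω_i`, each of codimension at least `l`, so
`N l ≤ r l`.
-/

/-- An alternating `l`-form is decomposable if it is the wedge `ξ₁ ∧ ... ∧ ξ_l` of `l`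
linear forms, i.e. `ω (v₁, ..., v_l) = det (ξ_i (v_j))`. -/
def IsDecomposable {K V : Type*} [Field K] [AddCommGroup V] [Module K V]
    {l : ℕ} (ω : V [⋀^Fin l]→ₗ[K] K) : Prop :=
  ∃ ξ : Fin l → (V →ₗ[K] K),
    ω = Matrix.detRowAlternating.compLinearMap (LinearMap.pi ξ)

/-- The tensor rank of an alternating `l`-form: the least `r` such that `ω` is a sum of
`r` decomposable forms (so the tensor rank of `0` is `0`). -/
noncomputable def tensorRank {K V : Type*} [Field K] [AddCommGroup V] [Module K V]
    {l : ℕ} (ω : V [⋀^Fin l]→ₗ[K] K) : ℕ :=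
  sInf {r : ℕ | ∃ g : Fin r → (V [⋀^Fin l]→ₗ[K] K),
    (∀ i, IsDecomposable (g i)) ∧ ω = ∑ i, g i}

open Module

instance {R M N ι : Type*} [Semiring R] [AddCommMonoid M] [Module R M] [AddCommMonoid N]
    [Module R N] : IsZeroApply (M [⋀^ι]→ₗ[R] N) (ι → M) N :=
  ⟨fun _ => rfl⟩

instance {R M N ι : Type*} [Semiring R] [AddCommMonoid M] [Module R M] [AddCommMonoid N]
    [Module R N] : IsAddApply (M [⋀^ι]→ₗ[R] N) (ι → M) N :=
  ⟨fun _ _ _ => rfl⟩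

section Decomposable

variable {K V : Type*} [Field K] [AddCommGroup V] [Module K V] {l : ℕ}

theorem isDecomposable_zero [NeZero l] : IsDecomposable (0 : V [⋀^Fin l]→ₗ[K] K) :=
  ⟨0, by ext w; exact (Matrix.detRowAlternating.map_coord_zero 0 rfl).symm⟩

theorem IsDecomposable.smul [NeZero l] {ω : V [⋀^Fin l]→ₗ[K] K} (h : IsDecomposable ω) (c : K) :
    IsDecomposable (c • ω) := by
  classical
  obtain ⟨ξ, rfl⟩ := h
  refine ⟨fun j => Function.update (1 : Fin l → K) 0 c j • ξ j, ?_⟩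
  ext w
  have := Matrix.det_mul_row (Function.update (1 : Fin l → K) 0 c) (.of fun i j => ξ j (w i))
  simp only [Finset.prod_update_of_mem (Finset.mem_univ _), Pi.one_apply, Finset.prod_const_one,
    mul_one] at this
  change c * Matrix.det (.of fun i j => ξ j (w i))
    = Matrix.det (.of fun i j => (Function.update (1 : Fin l → K) 0 c j • ξ j) (w i))
  simpa using this.symm

theorem IsDecomposable.compLinearMap {W : Type*} [AddCommGroup W] [Module K W]
    {ω : W [⋀^Fin l]→ₗ[K] K} (h : IsDecomposable ω) (φ : V →ₗ[K] W) :
    IsDecomposable (ω.compLinearMap φ) := by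
  obtain ⟨ξ, rfl⟩ := h
  exact ⟨fun j => ξ j ∘ₗ φ, rfl⟩

theorem Module.Basis.isDecomposable_det (b : Basis (Fin l) K V) : IsDecomposable b.det := by
  refine ⟨b.coord, ?_⟩
  ext w
  rw [Basis.det_apply, ← Matrix.det_transpose]
  rfl

theorem AlternatingMap.eq_zero_of_finrank_lt [FiniteDimensional K V] {N : Type*}
    [AddCommGroup N] [Module K N] (h : finrank K V < l) (f : V [⋀^Fin l]→ₗ[K] N) : f = 0 := by
  ext w
  refine f.map_linearDependent w fun hw => ?_
  have := hw.fintype_card_le_finrank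
  simp only [Fintype.card_fin] at this
  omega

theorem isDecomposable_of_finrank_le [NeZero l] [FiniteDimensional K V] (h : finrank K V ≤ l)
    (ω : V [⋀^Fin l]→ₗ[K] K) : IsDecomposable ω := by
  rcases h.lt_or_eq with h | h
  · rw [ω.eq_zero_of_finrank_lt h]
    exact isDecomposable_zero
  · let b := finBasisOfFinrankEq K V h
    rw [ω.eq_smul_basis_det b]
    exact b.isDecomposable_det.smul _

end Decomposable

section Radical

variable {K V N : Type*} [Field K] [AddCommGroup V] [Module K V] [AddCommGroup N] [Module K N]
  {n : ℕ}

def radical (f : V [⋀^Fin (n + 1)]→ₗ[K] N) : Submodule K V :=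
  LinearMap.ker (AlternatingMap.curryLeftLinearMap f)

theorem mem_radical {f : V [⋀^Fin (n + 1)]→ₗ[K] N} {v : V} :
    v ∈ radical f ↔ f.curryLeft v = 0 :=
  LinearMap.mem_ker

theorem map_eq_zero_of_mem_radical {f : V [⋀^Fin (n + 1)]→ₗ[K] N} {v : V} (hv : v ∈ radical f)
    {w : Fin (n + 1) → V} {s : Fin (n + 1)} (hs : w s = v) : f w = 0 := by
  have h : f (w ∘ Equiv.swap 0 s) = 0 := by
    have h0 : (w ∘ Equiv.swap 0 s) 0 = v := by simp [hs]
    rw [← Fin.cons_self_tail (w ∘ Equiv.swap 0 s), h0]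
    exact congrArg (· (Fin.tail (w ∘ Equiv.swap 0 s))) (mem_radical.1 hv)
  rwa [f.map_perm, smul_eq_zero_iff_eq] at h

theorem compLinearMap_projectionOnto_radical {f : V [⋀^Fin (n + 1)]→ₗ[K] N} {U : Submodule K V}
    (hU : IsCompl U (radical f)) :
    (f.compLinearMap U.subtype).compLinearMap (U.projectionOnto _ hU) = f := by
  classical
  ext w
  -- split each argument into its `U`- and radical parts and expand multilinearly
  conv_rhs => rw [← funext fun i => U.projection_add_projection_eq_self hU (w i)]
  rw [← Pi.add_def, f.map_add_univ, Finset.sum_eq_single Finset.univ]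
  · rw [Finset.piecewise_univ]
    rfl
  · intro s _ hs
    obtain ⟨i, hi⟩ : ∃ i, i ∉ s := by simpa [Finset.eq_univ_iff_forall] using hs
    exact map_eq_zero_of_mem_radical (s := i) (Submodule.projection_apply_mem hU.symm (w i))
      (Finset.piecewise_eq_of_notMem _ _ _ hi)
  · simp

theorem finrank_radical_add_le [FiniteDimensional K V] {f : V [⋀^Fin (n + 1)]→ₗ[K] N}
    (hf : f ≠ 0) : finrank K (radical f) + (n + 1) ≤ finrank K V := by
  obtain ⟨U, hU⟩ := (Submodule.exists_isCompl (radical f)).imp fun _ h => h.symm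
  rw [← Submodule.finrank_add_eq_of_isCompl hU]
  by_contra! h
  rw [← compLinearMap_projectionOnto_radical (f := f) hU,
    (f.compLinearMap U.subtype).eq_zero_of_finrank_lt (by omega)] at hf
  exact hf (AlternatingMap.zero_compLinearMap _)

theorem isDecomposable_of_finrank_le_finrank_radical_add [FiniteDimensional K V]
    {f : V [⋀^Fin (n + 1)]→ₗ[K] K} (h : finrank K V ≤ finrank K (radical f) + (n + 1)) :
    IsDecomposable f := by
  obtain ⟨U, hU⟩ := (Submodule.exists_isCompl (radical f)).imp fun _ h => h.symm
  rw [← compLinearMap_projectionOnto_radical (f := f) hU]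
  have := Submodule.finrank_add_eq_of_isCompl hU
  exact (isDecomposable_of_finrank_le (by omega) _).compLinearMap _

end Radical

section Corank

variable {K V : Type*} [Field K] [AddCommGroup V] [Module K V] {n : ℕ}

theorem finrank_alternatingMap [FiniteDimensional K V] (l : ℕ) :
    finrank K (V [⋀^Fin l]→ₗ[K] K) = (finrank K V).choose l := by
  rw [exteriorPower.alternatingMapLinearEquiv.finrank_eq, Subspace.dual_finrank_eq,
    exteriorPower.finrank_eq]

theorem exists_basis_det_curryLeft_eq [FiniteDimensional K V] (e : Basis (Fin (n + 2)) K V)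
    (ω : V [⋀^Fin (n + 1)]→ₗ[K] K) : ∃ v, e.det.curryLeft v = ω := by
  have hV : finrank K V = n + 2 := (finrank_eq_card_basis e).trans (Fintype.card_fin _)
  have : FiniteDimensional K (V [⋀^Fin (n + 1)]→ₗ[K] K) :=
    .equiv exteriorPower.alternatingMapLinearEquiv.symm
  have hrad : radical e.det = ⊥ := by
    have := finrank_radical_add_le e.det_ne_zero
    rw [← Submodule.finrank_eq_zero]
    omega
  have hinj : Function.Injective (AlternatingMap.curryLeftLinearMap e.det) :=
    LinearMap.ker_eq_bot.1 hrad
  refine (LinearMap.injective_iff_surjective_of_finrank_eq_finrank ?_).1 hinj ω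
  rw [finrank_alternatingMap, hV, Nat.choose_succ_self_right]

theorem isDecomposable_of_finrank_eq_succ [FiniteDimensional K V] (h : finrank K V = n + 2)
    (ω : V [⋀^Fin (n + 1)]→ₗ[K] K) : IsDecomposable ω := by
  obtain ⟨v, rfl⟩ := exists_basis_det_curryLeft_eq (finBasisOfFinrankEq K V h) ω
  rcases eq_or_ne v 0 with rfl | hv
  · rw [map_zero]
    exact isDecomposable_zero
  · apply isDecomposable_of_finrank_le_finrank_radical_add
    have hrad : radical (((finBasisOfFinrankEq K V h).det).curryLeft v) ≠ ⊥ :=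
      (Submodule.ne_bot_iff _).2 ⟨v, mem_radical.2 (AlternatingMap.curryLeft_same _ v), hv⟩
    have := Submodule.one_le_finrank_iff.2 hrad
    omega

end Corank

section LowerBound

variable {K : Type*} [Field K] {n : ℕ}

theorem mem_radical_sum {V N ι : Type*} [AddCommGroup V] [Module K V] [AddCommGroup N]
    [Module K N] {s : Finset ι} {g : ι → V [⋀^Fin (n + 1)]→ₗ[K] N} {x : V}
    (h : ∀ k ∈ s, x ∈ radical (g k)) : x ∈ radical (∑ k ∈ s, g k) := by
  change AlternatingMap.curryLeftLinearMap (∑ k ∈ s, g k) x = 0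
  rw [map_sum, LinearMap.sum_apply]
  exact Finset.sum_eq_zero h

theorem ker_pi_le_radical {V : Type*} [AddCommGroup V] [Module K V]
    (ξ : Fin (n + 1) → (V →ₗ[K] K)) :
    LinearMap.ker (LinearMap.pi ξ) ≤
      radical (Matrix.detRowAlternating.compLinearMap (LinearMap.pi ξ)) := by
  intro x hx
  rw [mem_radical]
  ext w
  exact Matrix.detRowAlternating.map_coord_zero 0 (by simpa using hx)

theorem finrank_le_finrank_radical_sum_add_mul {V : Type*} [AddCommGroup V] [Module K V]
    [FiniteDimensional K V] {r : ℕ} {g : Fin r → V [⋀^Fin (n + 1)]→ₗ[K] K}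
    (hg : ∀ k, IsDecomposable (g k)) :
    finrank K V ≤ finrank K (radical (∑ k, g k)) + r * (n + 1) := by
  choose ξ hξ using hg
  let Ξ : V →ₗ[K] (Fin r × Fin (n + 1) → K) := LinearMap.pi fun p => ξ p.1 p.2
  have hker : LinearMap.ker Ξ ≤ radical (∑ k, g k) := by
    intro x hx
    have hxk : ∀ k, x ∈ radical (g k) := fun k => by
      rw [hξ k]
      refine ker_pi_le_radical _ (LinearMap.mem_ker.2 (funext fun j => ?_))
      exact congrFun (LinearMap.mem_ker.1 hx) (k, j)
    exact mem_radical_sum fun k _ => hxk k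
  have hrange : finrank K (LinearMap.range Ξ) ≤ r * (n + 1) :=
    (Submodule.finrank_le _).trans (by simp)
  have := LinearMap.finrank_range_add_finrank_ker Ξ
  have := Submodule.finrank_mono hker
  omega

theorem mem_radical_of_mem_radical_sum_compLinearMap_proj {N ι : Type*} [AddCommGroup N]
    [Module K N] [Fintype ι] [DecidableEq ι] {V : ι → Type*} [∀ i, AddCommGroup (V i)]
    [∀ i, Module K (V i)] {ω : ∀ i, V i [⋀^Fin (n + 2)]→ₗ[K] N} {x : ∀ i, V i}
    (hx : x ∈ radical (∑ i, (ω i).compLinearMap (LinearMap.proj i))) (i : ι) :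
    x i ∈ radical (ω i) := by
  rw [mem_radical] at hx ⊢
  ext w
  -- in the second slot a vector supported on `V i` kills every summand but the `i`-th
  have h := congrArg (· fun s => Pi.single i (w s)) hx
  simp only [AlternatingMap.curryLeft_apply_apply, AlternatingMap.zero_apply, sum_apply,
    AlternatingMap.compLinearMap_apply] at h ⊢
  rw [Finset.sum_eq_single i] at h
  · convert h using 2
    funext k
    cases k using Fin.cases <;> simp
  · intro j _ hj
    exact (ω j).map_coord_zero 1 (by simp [Pi.single_eq_of_ne hj])
  · simp

theorem finrank_radical_sum_compLinearMap_proj_add_le {ι : Type*} [Fintype ι] [DecidableEq ι]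
    {V : ι → Type*} [∀ i, AddCommGroup (V i)] [∀ i, Module K (V i)]
    [∀ i, FiniteDimensional K (V i)] {ω : ∀ i, V i [⋀^Fin (n + 2)]→ₗ[K] K} (hω : ∀ i, ω i ≠ 0) :
    finrank K (radical (∑ i, (ω i).compLinearMap (LinearMap.proj i))) + Fintype.card ι * (n + 2)
      ≤ finrank K (∀ i, V i) := by
  set R := radical (∑ i, (ω i).compLinearMap (LinearMap.proj i))
  let restrict : R →ₗ[K] ∀ i, radical (ω i) := LinearMap.pi fun i =>
    ((LinearMap.proj i).comp R.subtype).codRestrict _ fun x =>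
      mem_radical_of_mem_radical_sum_compLinearMap_proj x.2 i
  have hinj : Function.Injective restrict := fun x y hxy =>
    Subtype.ext (funext fun i => congrArg Subtype.val (congrFun hxy i))
  have hR := LinearMap.finrank_le_finrank_of_injective hinj
  rw [finrank_pi_fintype] at hR
  have hV : ∑ i, (finrank K (radical (ω i)) + (n + 2)) ≤ ∑ i, finrank K (V i) :=
    Finset.sum_le_sum fun i _ => finrank_radical_add_le (hω i)
  rw [Finset.sum_add_distrib, Finset.sum_const, Finset.card_univ, smul_eq_mul] at hV
  rw [finrank_pi_fintype]
  omega

end LowerBound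

theorem stmt6 {K : Type*} [Field K] {N l : ℕ} (hl : 2 ≤ l)
    (V : Fin N → Type*) [∀ i, AddCommGroup (V i)] [∀ i, Module K (V i)]
    [∀ i, FiniteDimensional K (V i)]
    (hdim : ∀ i, Module.finrank K (V i) = l ∨ Module.finrank K (V i) = l + 1)
    (ω : ∀ i, (V i) [⋀^Fin l]→ₗ[K] K) (hω : ∀ i, ω i ≠ 0) :
    tensorRank (∑ i, (ω i).compLinearMap
        (LinearMap.proj i : ((j : Fin N) → V j) →ₗ[K] V i)) = N := by
  obtain ⟨n, rfl⟩ : ∃ n, l = n + 2 := ⟨l - 2, by omega⟩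
  have hdec : ∀ i, IsDecomposable ((ω i).compLinearMap
      (LinearMap.proj i : ((j : Fin N) → V j) →ₗ[K] V i)) := fun i =>
    ((hdim i).elim (fun h => isDecomposable_of_finrank_le h.le _)
      (fun h => isDecomposable_of_finrank_eq_succ h _)).compLinearMap _
  refine le_antisymm (Nat.sInf_le ⟨_, hdec, rfl⟩) (le_csInf ⟨N, _, hdec, rfl⟩ ?_)
  rintro r ⟨g, hg, hsum⟩
  have hupper := finrank_le_finrank_radical_sum_add_mul hg
  have hlower := finrank_radical_sum_compLinearMap_proj_add_le hω
  rw [← hsum] at hupper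
  rw [Fintype.card_fin] at hlower
  exact Nat.le_of_mul_le_mul_right (by linarith) (by omega : 0 < n + 2)
end

section
/- Let K be a field of characteristic 2, V a finite-dimensional K-vector space, a ∈ K a nonzero scalar, and a_1, a_2, a_3, a_4, b_1, b_2, b_3, b_4 ∈ V* linearly independent linear forms. Consider the alternating 3-form η = (a_3 ∧ a_4 + a·(b_3 ∧ b_4)) ∧ (b_2 + a_1) + a_3 ∧ b_4 ∧ (a_2 + a·b_1) + b_3 ∧ a_4 ∧ (a_2 + a·a_1) ∈ ⋀^3 V*. Then rk(η) ≥ 7, and consequently the tensor rank of η is at least 3. -/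
/-- The wedge product `ξ₁ ∧ ξ₂ ∧ ξ₃` of three linear forms, as an alternating `3`-form. -/
noncomputable def wedge3 {K V : Type*} [Field K] [AddCommGroup V] [Module K V]
    (ξ₁ ξ₂ ξ₃ : V →ₗ[K] K) : V [⋀^Fin 3]→ₗ[K] K :=
  Matrix.detRowAlternating.compLinearMap (LinearMap.pi ![ξ₁, ξ₂, ξ₃])

/-!
Let `α₁, …, α₄, β₁, …, β₄ ∈ V` be dual to `a₁, …, a₄, b₁, …, b₄`. The contractions of `η` with
`β₂, a α₂ - β₁, β₁, α₃, α₄, β₃, β₄` contain the monomials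
`a₃∧a₄, b₃∧a₄, a₃∧b₄, a₄∧b₂, a₃∧b₂, b₄∧b₂, b₃∧b₂` respectively, with coefficient `±1` or `±a`,
and none of the other six contractions contains that monomial. Evaluating on the matching pairs of
dual vectors gives a diagonal matrix with nonzero diagonal, so `rk η ≥ 7`.

The contractions of `ξ₁ ∧ ⋯ ∧ ξ_l` factor through `v ↦ (ξ₁ v, …, ξ_l v) ∈ Kˡ`, so a decomposable
form has rank at most `l`; rank is subadditive, hence a sum of `r` decomposable `3`-forms has rank
at most `3 r`, and `rk η ≥ 7` forces `trk η ≥ 3`.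
-/

section LinearAlgebra

open Module

variable {K V W : Type*} [Field K] [AddCommGroup V] [Module K V] [AddCommGroup W] [Module K W]

theorem LinearIndependent.exists_dual_vectors {ι : Type*} [Fintype ι] [DecidableEq ι]
    {f : ι → Dual K V} (hf : LinearIndependent K f) :
    ∃ e : ι → V, ∀ i j, f i (e j) = Pi.single (M := fun _ => K) j 1 i := by
  have hB : Function.Surjective (Fintype.linearCombination K f).flip :=
    LinearMap.flip_surjective_iff₁.2 hf.fintypeLinearCombination_injective
  choose e he using fun j => hB (LinearMap.proj j)
  refine ⟨e, fun i j => ?_⟩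
  have := LinearMap.congr_fun (he j) (Pi.single i 1)
  simpa [Fintype.linearCombination_apply_single, Pi.single_apply, eq_comm] using this

theorem LinearMap.finrank_range_add_le [FiniteDimensional K V] (f g : V →ₗ[K] W) :
    finrank K (LinearMap.range (f + g)) ≤
      finrank K (LinearMap.range f) + finrank K (LinearMap.range g) :=
  (Submodule.finrank_mono (LinearMap.range_add_le f g)).trans
    (Submodule.finrank_add_le_finrank_add_finrank _ _)

theorem LinearMap.finrank_range_sum_le [FiniteDimensional K V] {ι : Type*} (s : Finset ι)
    (f : ι → V →ₗ[K] W) :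
    finrank K (LinearMap.range (∑ i ∈ s, f i)) ≤ ∑ i ∈ s, finrank K (LinearMap.range (f i)) := by
  classical
  induction s using Finset.induction_on with
  | empty => rw [Finset.sum_empty, LinearMap.range_zero, finrank_bot]; rfl
  | insert i s hi ih =>
    rw [Finset.sum_insert hi, Finset.sum_insert hi]
    exact (finrank_range_add_le _ _).trans (Nat.add_le_add_left ih _)

end LinearAlgebra

section FormRank

open Module

variable {K V : Type*} [Field K] [AddCommGroup V] [Module K V]

theorem contractMap_sum {l : ℕ} {ι : Type*} (s : Finset ι) (ω : ι → V [⋀^Fin l]→ₗ[K] K) :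
    contractMap (∑ i ∈ s, ω i) = ∑ i ∈ s, contractMap (ω i) := by
  cases l with
  | zero => simp [contractMap]
  | succ n => exact map_sum AlternatingMap.curryLeftLinearMap ω s

theorem formRank_sum_le [FiniteDimensional K V] {l : ℕ} {ι : Type*} (s : Finset ι)
    (ω : ι → V [⋀^Fin l]→ₗ[K] K) :
    formRank (∑ i ∈ s, ω i) ≤ ∑ i ∈ s, formRank (ω i) := by
  unfold formRank
  rw [contractMap_sum]
  exact LinearMap.finrank_range_sum_le s _

theorem IsDecomposable.formRank_le {l : ℕ} {ω : V [⋀^Fin l]→ₗ[K] K} (hω : IsDecomposable ω) :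
    formRank ω ≤ l := by
  obtain ⟨ξ, rfl⟩ := hω
  cases l with
  | zero =>
    show finrank K (LinearMap.range (0 : V →ₗ[K] V [⋀^Fin 0]→ₗ[K] K)) ≤ 0
    rw [LinearMap.range_zero, finrank_bot]
  | succ n =>
    let pullback : ((Fin (n + 1) → K) [⋀^Fin n]→ₗ[K] K) →ₗ[K] (V [⋀^Fin n]→ₗ[K] K) :=
      { toFun := fun f => f.compLinearMap (LinearMap.pi ξ)
        map_add' := fun f g => AlternatingMap.add_compLinearMap f g _
        map_smul' := fun _ _ => rfl }
    have hfactor : contractMap (Matrix.detRowAlternating.compLinearMap (LinearMap.pi ξ)) =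
        (pullback ∘ₗ Matrix.detRowAlternating.curryLeft) ∘ₗ LinearMap.pi ξ :=
      LinearMap.ext fun v => AlternatingMap.curryLeft_compLinearMap _ _ v
    calc formRank (Matrix.detRowAlternating.compLinearMap (LinearMap.pi ξ))
        = finrank K ((LinearMap.range (LinearMap.pi ξ)).map
            (pullback ∘ₗ Matrix.detRowAlternating.curryLeft)) := by
          rw [formRank, hfactor, LinearMap.range_comp]; rfl
      _ ≤ finrank K (LinearMap.range (LinearMap.pi ξ)) := Submodule.finrank_map_le _ _
      _ ≤ n + 1 := (Submodule.finrank_le _).trans (by simp)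

theorem formRank_le_mul_tensorRank [FiniteDimensional K V] {l : ℕ} {ω : V [⋀^Fin l]→ₗ[K] K}
    (hω : ∃ r, ∃ g : Fin r → V [⋀^Fin l]→ₗ[K] K, (∀ i, IsDecomposable (g i)) ∧ ω = ∑ i, g i) :
    formRank ω ≤ l * tensorRank ω := by
  obtain ⟨g, hg, hsum⟩ : tensorRank ω ∈ {r : ℕ | ∃ g : Fin r → V [⋀^Fin l]→ₗ[K] K,
      (∀ i, IsDecomposable (g i)) ∧ ω = ∑ i, g i} := Nat.sInf_mem hω
  calc formRank ω = formRank (∑ i, g i) := congr_arg formRank hsum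
    _ ≤ ∑ i, formRank (g i) := formRank_sum_le _ g
    _ ≤ ∑ _i, l := Finset.sum_le_sum fun i _ => (hg i).formRank_le
    _ = l * tensorRank ω := by
      rw [Finset.sum_const, Finset.card_univ, Fintype.card_fin, smul_eq_mul, mul_comm]

theorem le_formRank_of_biorthogonal [FiniteDimensional K V] {l : ℕ} {ι : Type*} [Fintype ι]
    (ω : V [⋀^Fin l]→ₗ[K] K) (v : ι → V) (p : ι → Fin (l - 1) → V)
    (hdiag : ∀ i, contractMap ω (v i) (p i) ≠ 0)
    (hoff : ∀ i j, i ≠ j → contractMap ω (v i) (p j) = 0) :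
    Fintype.card ι ≤ formRank ω := by
  have hindep : LinearIndependent K fun i => contractMap ω (v i) := by
    refine Fintype.linearIndependent_iff.2 fun g hg j => ?_
    have hj := congr_arg
      (AddMonoidHom.mk' (fun σ : V [⋀^Fin (l - 1)]→ₗ[K] K => σ (p j)) fun _ _ => rfl) hg
    simp only [map_sum, map_zero, AddMonoidHom.mk'_apply, AlternatingMap.smul_apply,
      smul_eq_mul] at hj
    rw [Finset.sum_eq_single j (fun i _ hij => by rw [hoff i j hij, mul_zero])
      (by simp)] at hj
    exact (mul_eq_zero.1 hj).resolve_right (hdiag j)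
  calc Fintype.card ι = finrank K (Submodule.span K (Set.range fun i => contractMap ω (v i))) :=
        (finrank_span_eq_card hindep).symm
    _ ≤ formRank ω := Submodule.finrank_mono <|
        Submodule.span_le.2 <| Set.range_subset_iff.2 fun i => LinearMap.mem_range_self _ (v i)

end FormRank

section Wedge3

variable {K V : Type*} [Field K] [AddCommGroup V] [Module K V]

theorem wedge3_apply (ξ₁ ξ₂ ξ₃ : V →ₗ[K] K) (v : Fin 3 → V) :
    wedge3 ξ₁ ξ₂ ξ₃ v =
      ξ₁ (v 0) * ξ₂ (v 1) * ξ₃ (v 2) - ξ₁ (v 0) * ξ₂ (v 2) * ξ₃ (v 1)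
      - ξ₁ (v 1) * ξ₂ (v 0) * ξ₃ (v 2) + ξ₁ (v 1) * ξ₂ (v 2) * ξ₃ (v 0)
      + ξ₁ (v 2) * ξ₂ (v 0) * ξ₃ (v 1) - ξ₁ (v 2) * ξ₂ (v 1) * ξ₃ (v 0) := by
  change Matrix.det (Matrix.of fun i j => (![ξ₁, ξ₂, ξ₃] j) (v i)) = _
  simp [Matrix.det_fin_three]
  ring

theorem isDecomposable_wedge3 (ξ₁ ξ₂ ξ₃ : V →ₗ[K] K) : IsDecomposable (wedge3 ξ₁ ξ₂ ξ₃) :=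
  ⟨_, rfl⟩

theorem smul_wedge3 (c : K) (ξ₁ ξ₂ ξ₃ : V →ₗ[K] K) :
    c • wedge3 ξ₁ ξ₂ ξ₃ = wedge3 (c • ξ₁) ξ₂ ξ₃ := by
  ext v
  simp only [AlternatingMap.smul_apply, wedge3_apply, LinearMap.smul_apply, smul_eq_mul]
  ring

end Wedge3

section EtaForm

variable {K V : Type*} [Field K] [AddCommGroup V] [Module K V]

noncomputable def etaForm (a : K) (a₁ a₂ a₃ a₄ b₁ b₂ b₃ b₄ : V →ₗ[K] K) : V [⋀^Fin 3]→ₗ[K] K :=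
  wedge3 a₃ a₄ (b₂ + a₁) + a • wedge3 b₃ b₄ (b₂ + a₁)
    + wedge3 a₃ b₄ (a₂ + a • b₁) + wedge3 b₃ a₄ (a₂ + a • a₁)

theorem etaForm_eq_sum_isDecomposable (a : K) (a₁ a₂ a₃ a₄ b₁ b₂ b₃ b₄ : V →ₗ[K] K) :
    ∃ r, ∃ g : Fin r → V [⋀^Fin 3]→ₗ[K] K,
      (∀ i, IsDecomposable (g i)) ∧ etaForm a a₁ a₂ a₃ a₄ b₁ b₂ b₃ b₄ = ∑ i, g i := by
  refine ⟨4, ![wedge3 a₃ a₄ (b₂ + a₁), wedge3 (a • b₃) b₄ (b₂ + a₁),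
    wedge3 a₃ b₄ (a₂ + a • b₁), wedge3 b₃ a₄ (a₂ + a • a₁)], ?_, ?_⟩
  · intro i
    fin_cases i <;> exact isDecomposable_wedge3 _ _ _
  · rw [etaForm, smul_wedge3, Fin.sum_univ_four]
    rfl

theorem contractMap_etaForm_apply (a : K) (a₁ a₂ a₃ a₄ b₁ b₂ b₃ b₄ : V →ₗ[K] K) (e : Fin 8 → V)
    (he : ∀ i j, ![a₁, a₂, a₃, a₄, b₁, b₂, b₃, b₄] i (e j) = Pi.single (M := fun _ => K) j 1 i)
    (r c : Fin 7) :
    contractMap (etaForm a a₁ a₂ a₃ a₄ b₁ b₂ b₃ b₄)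
        (![e 5, a • e 1 - e 4, e 4, e 2, e 3, e 6, e 7] r)
        ![![e 2, e 6, e 2, e 3, e 2, e 7, e 6] c, ![e 3, e 3, e 7, e 5, e 5, e 5, e 5] c] =
      if r = c then ![1, a, a, 1, -1, a, -a] r else 0 := by
  have h₁ : ∀ j, a₁ (e j) = Pi.single (M := fun _ => K) j 1 0 := he 0
  have h₂ : ∀ j, a₂ (e j) = Pi.single (M := fun _ => K) j 1 1 := he 1
  have h₃ : ∀ j, a₃ (e j) = Pi.single (M := fun _ => K) j 1 2 := he 2
  have h₄ : ∀ j, a₄ (e j) = Pi.single (M := fun _ => K) j 1 3 := he 3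
  have h₅ : ∀ j, b₁ (e j) = Pi.single (M := fun _ => K) j 1 4 := he 4
  have h₆ : ∀ j, b₂ (e j) = Pi.single (M := fun _ => K) j 1 5 := he 5
  have h₇ : ∀ j, b₃ (e j) = Pi.single (M := fun _ => K) j 1 6 := he 6
  have h₈ : ∀ j, b₄ (e j) = Pi.single (M := fun _ => K) j 1 7 := he 7
  fin_cases r <;> fin_cases c <;>
    simp [contractMap, etaForm, wedge3_apply, h₁, h₂, h₃, h₄, h₅, h₆, h₇, h₈]

theorem seven_le_formRank_etaForm [FiniteDimensional K V] {a : K} (ha : a ≠ 0)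
    {a₁ a₂ a₃ a₄ b₁ b₂ b₃ b₄ : V →ₗ[K] K}
    (hindep : LinearIndependent K ![a₁, a₂, a₃, a₄, b₁, b₂, b₃, b₄]) :
    7 ≤ formRank (etaForm a a₁ a₂ a₃ a₄ b₁ b₂ b₃ b₄) := by
  obtain ⟨e, he⟩ := hindep.exists_dual_vectors
  have heval := contractMap_etaForm_apply a a₁ a₂ a₃ a₄ b₁ b₂ b₃ b₄ e he
  simpa using le_formRank_of_biorthogonal _ ![e 5, a • e 1 - e 4, e 4, e 2, e 3, e 6, e 7]
    (fun c => ![![e 2, e 6, e 2, e 3, e 2, e 7, e 6] c, ![e 3, e 3, e 7, e 5, e 5, e 5, e 5] c])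
    (fun r => by rw [heval, if_pos rfl]; fin_cases r <;> simp [ha])
    (fun r c hrc => by rw [heval, if_neg hrc])

end EtaForm

theorem stmt12_general {K V : Type*} [Field K] [AddCommGroup V] [Module K V]
    [FiniteDimensional K V] (a : K) (ha : a ≠ 0)
    (a₁ a₂ a₃ a₄ b₁ b₂ b₃ b₄ : V →ₗ[K] K)
    (hindep : LinearIndependent K ![a₁, a₂, a₃, a₄, b₁, b₂, b₃, b₄]) :
    7 ≤ formRank (wedge3 a₃ a₄ (b₂ + a₁) + a • wedge3 b₃ b₄ (b₂ + a₁)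
        + wedge3 a₃ b₄ (a₂ + a • b₁) + wedge3 b₃ a₄ (a₂ + a • a₁)) ∧
      3 ≤ tensorRank (wedge3 a₃ a₄ (b₂ + a₁) + a • wedge3 b₃ b₄ (b₂ + a₁)
        + wedge3 a₃ b₄ (a₂ + a • b₁) + wedge3 b₃ a₄ (a₂ + a • a₁)) := by
  change 7 ≤ formRank (etaForm a a₁ a₂ a₃ a₄ b₁ b₂ b₃ b₄) ∧
    3 ≤ tensorRank (etaForm a a₁ a₂ a₃ a₄ b₁ b₂ b₃ b₄)
  have hrank := seven_le_formRank_etaForm ha hindep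
  have hmul := formRank_le_mul_tensorRank (etaForm_eq_sum_isDecomposable a a₁ a₂ a₃ a₄ b₁ b₂ b₃ b₄)
  exact ⟨hrank, by omega⟩

/-- in characteristic 2, with `a ≠ 0` and linearly independent linear forms
`a₁, a₂, a₃, a₄, b₁, b₂, b₃, b₄`, the `3`-form
`η = (a₃ ∧ a₄ + a·(b₃ ∧ b₄)) ∧ (b₂ + a₁) + a₃ ∧ b₄ ∧ (a₂ + a·b₁) + b₃ ∧ a₄ ∧ (a₂ + a·a₁)`
has rank at least `7`, and tensor rank at least `3`. -/
theorem stmt12 {K V : Type*} [Field K] [CharP K 2] [AddCommGroup V] [Module K V]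
    [FiniteDimensional K V] (a : K) (ha : a ≠ 0)
    (a₁ a₂ a₃ a₄ b₁ b₂ b₃ b₄ : V →ₗ[K] K)
    (hindep : LinearIndependent K ![a₁, a₂, a₃, a₄, b₁, b₂, b₃, b₄]) :
    7 ≤ formRank (wedge3 a₃ a₄ (b₂ + a₁) + a • wedge3 b₃ b₄ (b₂ + a₁)
        + wedge3 a₃ b₄ (a₂ + a • b₁) + wedge3 b₃ a₄ (a₂ + a • a₁)) ∧
      3 ≤ tensorRank (wedge3 a₃ a₄ (b₂ + a₁) + a • wedge3 b₃ b₄ (b₂ + a₁)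
        + wedge3 a₃ b₄ (a₂ + a • b₁) + wedge3 b₃ a₄ (a₂ + a • a₁)) :=
  stmt12_general a ha a₁ a₂ a₃ a₄ b₁ b₂ b₃ b₄ hindep
end
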